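/- Let f_W(x) = W^L ρ(W^{L-1} ⋯ ρ(W^1 x) ⋯) be an L-layer neural network with 1-Lipschitz activation ρ applied entrywise. Then for any x̂ ∈ B_x(ε_x) and every pair of output classes i, j: f^{ij}_W(x̂) − f^{ij}_W(x) ≤ ε_x ‖W^L_{i,:} − W^L_{j,:}‖_1 ∏_{m=1}^{L−1} ‖W^m‖_∞. -/

import Mathlib

/-! Each layer is a contraction for the sup-norm up to the factor `‖W^m‖_∞`, since `ρ` is
1-Lipschitz entrywise and `‖W v‖_∞ ≤ ‖W‖_∞ ‖v‖_∞`; so the hidden states of `x̂` and `x` differ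
by at most `ε_x ∏ ‖W^m‖_∞` in sup-norm. The margin difference is the dot product of
`W^L_{i,:} − W^L_{j,:}` with that difference, bounded by Hölder's inequality `|a ⬝ v| ≤ ‖a‖₁ ‖v‖_∞`. -/

/-- Vector ℓ1 norm: `‖v‖₁ = Σ_q |v_q|`. -/
noncomputable def vecL1 {n : ℕ} (v : Fin n → ℝ) : ℝ := ∑ q, |v q|

/-- Vector ℓ∞ norm: `‖v‖_∞ = max_q |v_q|`. -/
noncomputable def vecLinf {n : ℕ} (v : Fin n → ℝ) : ℝ := ⨆ q, |v q|

/-- Matrix ℓ∞→ℓ∞ operator norm: `‖W‖_∞ = max_p Σ_q |W_{p,q}|`. -/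
noncomputable def matLinf {m n : ℕ} (W : Matrix (Fin m) (Fin n) ℝ) : ℝ := ⨆ p, ∑ q, |W p q|

/-- Matrix ℓ1→ℓ1 operator norm: `‖W‖₁ = max_q Σ_p |W_{p,q}|`. -/
noncomputable def matL1 {m n : ℕ} (W : Matrix (Fin m) (Fin n) ℝ) : ℝ := ⨆ q, ∑ p, |W p q|

/-- `zLayer d ρ W k x` is the `k`-th zLayer-layer output
`z^k_W(x) = ρ(W^k ⋯ ρ(W^1 x) ⋯)`, with `z^0_W(x) = x`.
Here `W k` denotes the paper's weight matrix `W^{k+1}`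
(so `W : ∀ k, Matrix (Fin (d (k+1))) (Fin (d k)) ℝ` lists `W^1, W^2, …`). -/
noncomputable def zLayer (d : ℕ → ℕ) (ρ : ℝ → ℝ)
    (W : ∀ k, Matrix (Fin (d (k + 1))) (Fin (d k)) ℝ) :
    (k : ℕ) → (Fin (d 0) → ℝ) → Fin (d k) → ℝ
  | 0, x => x
  | k + 1, x => fun p => ρ ((W k).mulVec (zLayer d ρ W k x) p)

/-- `nnet d ρ W k x = (W^{k+1}) z^k_W(x)` is the output of the `(k+1)`-layer network
`f_W(x) = W^{k+1} ρ(W^k ⋯ ρ(W^1 x) ⋯)`.  In particular `nnet d ρ W (L-1)` is the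
paper's `L`-layer network. -/
noncomputable def nnet (d : ℕ → ℕ) (ρ : ℝ → ℝ)
    (W : ∀ k, Matrix (Fin (d (k + 1))) (Fin (d k)) ℝ) (k : ℕ)
    (x : Fin (d 0) → ℝ) : Fin (d (k + 1)) → ℝ :=
  (W k).mulVec (zLayer d ρ W k x)

section Norms

open Matrix

variable {m n : ℕ}

lemma vecLinf_nonneg (v : Fin n → ℝ) : 0 ≤ vecLinf v :=
  Real.iSup_nonneg fun q => abs_nonneg (v q)

lemma abs_le_vecLinf (v : Fin n → ℝ) (q : Fin n) : |v q| ≤ vecLinf v :=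
  le_ciSup (f := fun q => |v q|) (Set.finite_range _).bddAbove q

lemma vecLinf_le {v : Fin n → ℝ} {a : ℝ} (h : ∀ q, |v q| ≤ a) (ha : 0 ≤ a) : vecLinf v ≤ a :=
  Real.iSup_le h ha

lemma vecL1_row_le_matLinf (W : Matrix (Fin m) (Fin n) ℝ) (p : Fin m) :
    vecL1 (W p) ≤ matLinf W :=
  le_ciSup (f := fun p => ∑ q, |W p q|) (Set.finite_range _).bddAbove p

lemma matLinf_nonneg (W : Matrix (Fin m) (Fin n) ℝ) : 0 ≤ matLinf W :=
  Real.iSup_nonneg fun _ => Finset.sum_nonneg fun _ _ => abs_nonneg _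

lemma abs_dotProduct_le_vecL1_mul_vecLinf (a v : Fin n → ℝ) :
    |a ⬝ᵥ v| ≤ vecL1 a * vecLinf v :=
  calc |a ⬝ᵥ v| ≤ ∑ q, |a q| * |v q| := by
        simpa only [dotProduct, abs_mul] using Finset.abs_sum_le_sum_abs (fun q => a q * v q) _
    _ ≤ ∑ q, |a q| * vecLinf v :=
        Finset.sum_le_sum fun q _ => mul_le_mul_of_nonneg_left (abs_le_vecLinf v q) (abs_nonneg _)
    _ = vecL1 a * vecLinf v := by rw [vecL1, Finset.sum_mul]

lemma vecLinf_mulVec_le (W : Matrix (Fin m) (Fin n) ℝ) (v : Fin n → ℝ) :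
    vecLinf (W *ᵥ v) ≤ matLinf W * vecLinf v := by
  refine vecLinf_le (fun p => ?_) (mul_nonneg (matLinf_nonneg W) (vecLinf_nonneg v))
  calc |(W *ᵥ v) p| ≤ vecL1 (W p) * vecLinf v := abs_dotProduct_le_vecL1_mul_vecLinf (W p) v
    _ ≤ matLinf W * vecLinf v :=
        mul_le_mul_of_nonneg_right (vecL1_row_le_matLinf W p) (vecLinf_nonneg v)

lemma vecLinf_comp_sub_comp_le {ρ : ℝ → ℝ} (hρ : ∀ s t, |ρ s - ρ t| ≤ |s - t|)
    (u v : Fin n → ℝ) : vecLinf (ρ ∘ u - ρ ∘ v) ≤ vecLinf (u - v) :=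
  vecLinf_le (fun q => (hρ (u q) (v q)).trans (abs_le_vecLinf (u - v) q)) (vecLinf_nonneg _)

end Norms

section Network

open Matrix

variable (d : ℕ → ℕ) (ρ : ℝ → ℝ) (W : ∀ k, Matrix (Fin (d (k + 1))) (Fin (d k)) ℝ)

lemma vecLinf_zLayer_sub_le (hρ : ∀ s t, |ρ s - ρ t| ≤ |s - t|) (x xhat : Fin (d 0) → ℝ) (k : ℕ) :
    vecLinf (zLayer d ρ W k xhat - zLayer d ρ W k x) ≤
      (∏ m ∈ Finset.range k, matLinf (W m)) * vecLinf (xhat - x) := by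
  induction k with
  | zero => simp [zLayer]
  | succ k ih =>
    calc vecLinf (zLayer d ρ W (k + 1) xhat - zLayer d ρ W (k + 1) x)
        ≤ vecLinf (W k *ᵥ zLayer d ρ W k xhat - W k *ᵥ zLayer d ρ W k x) :=
          vecLinf_comp_sub_comp_le hρ _ _
      _ ≤ matLinf (W k) * vecLinf (zLayer d ρ W k xhat - zLayer d ρ W k x) := by
          rw [← Matrix.mulVec_sub]; exact vecLinf_mulVec_le _ _
      _ ≤ matLinf (W k) * ((∏ m ∈ Finset.range k, matLinf (W m)) * vecLinf (xhat - x)) :=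
          mul_le_mul_of_nonneg_left ih (matLinf_nonneg _)
      _ = (∏ m ∈ Finset.range (k + 1), matLinf (W m)) * vecLinf (xhat - x) := by
          rw [Finset.prod_range_succ]; ring

lemma nnet_margin_sub_eq (k : ℕ) (x xhat : Fin (d 0) → ℝ) (i j : Fin (d (k + 1))) :
    (nnet d ρ W k xhat i - nnet d ρ W k xhat j) - (nnet d ρ W k x i - nnet d ρ W k x j) =
      (W k i - W k j) ⬝ᵥ (zLayer d ρ W k xhat - zLayer d ρ W k x) := by
  simp only [nnet, Matrix.mulVec, sub_dotProduct, dotProduct_sub]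

lemma nnet_margin_sub_le (hρ : ∀ s t, |ρ s - ρ t| ≤ |s - t|) (k : ℕ) {εx : ℝ} (hεx : 0 ≤ εx)
    {x xhat : Fin (d 0) → ℝ} (hx : ∀ q, |xhat q - x q| ≤ εx) (i j : Fin (d (k + 1))) :
    (nnet d ρ W k xhat i - nnet d ρ W k xhat j) - (nnet d ρ W k x i - nnet d ρ W k x j) ≤
      εx * vecL1 (fun q => W k i q - W k j q) * ∏ m ∈ Finset.range k, matLinf (W m) := by
  have hinput : vecLinf (xhat - x) ≤ εx := vecLinf_le hx hεx
  have hprod : 0 ≤ ∏ m ∈ Finset.range k, matLinf (W m) :=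
    Finset.prod_nonneg fun m _ => matLinf_nonneg (W m)
  rw [nnet_margin_sub_eq]
  calc (W k i - W k j) ⬝ᵥ (zLayer d ρ W k xhat - zLayer d ρ W k x)
      ≤ vecL1 (W k i - W k j) * vecLinf (zLayer d ρ W k xhat - zLayer d ρ W k x) :=
        (le_abs_self _).trans (abs_dotProduct_le_vecL1_mul_vecLinf _ _)
    _ ≤ vecL1 (W k i - W k j) * ((∏ m ∈ Finset.range k, matLinf (W m)) * εx) := by
        gcongr
        · exact Finset.sum_nonneg fun q _ => abs_nonneg _
        · exact (vecLinf_zLayer_sub_le d ρ W hρ x xhat k).trans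
            (mul_le_mul_of_nonneg_left hinput hprod)
    _ = εx * vecL1 (fun q => W k i q - W k j q) * ∏ m ∈ Finset.range k, matLinf (W m) := by
        rw [Pi.sub_def]; ring

end Network

theorem statement13_general (d : ℕ → ℕ) (ρ : ℝ → ℝ)
    (hρ_lip : ∀ s t, |ρ s - ρ t| ≤ |s - t|)
    (L : ℕ)
    (W : ∀ k, Matrix (Fin (d (k + 1))) (Fin (d k)) ℝ)
    (εx : ℝ) (hεx : 0 ≤ εx)
    (x xhat : Fin (d 0) → ℝ) (hx : ∀ q, |xhat q - x q| ≤ εx)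
    (i j : Fin (d (L - 1 + 1))) :
    (nnet d ρ W (L - 1) xhat i - nnet d ρ W (L - 1) xhat j) -
        (nnet d ρ W (L - 1) x i - nnet d ρ W (L - 1) x j) ≤
      εx * vecL1 (fun q => W (L - 1) i q - W (L - 1) j q) *
        ∏ m ∈ Finset.range (L - 1), matLinf (W m) :=
  nnet_margin_sub_le d ρ W hρ_lip (L - 1) hεx hx i j

/-- for an `L`-layer network with `1`-Lipschitz activation and any
`x̂ ∈ B_x(ε_x)`:
`f^{ij}_W(x̂) − f^{ij}_W(x) ≤ ε_x ‖W^L_{i,:} − W^L_{j,:}‖_1 ∏_{m=1}^{L−1} ‖W^m‖_∞`.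
(`W k` is the paper's `W^{k+1}`; the `L`-layer network is `nnet d ρ W (L-1)`.) -/
theorem statement13 (d : ℕ → ℕ) (ρ : ℝ → ℝ)
    (hρ_lip : ∀ s t, |ρ s - ρ t| ≤ |s - t|)
    (L : ℕ) (hL : 1 ≤ L)
    (W : ∀ k, Matrix (Fin (d (k + 1))) (Fin (d k)) ℝ)
    (εx : ℝ) (hεx : 0 ≤ εx)
    (x xhat : Fin (d 0) → ℝ) (hx : ∀ q, |xhat q - x q| ≤ εx)
    (i j : Fin (d (L - 1 + 1))) :
    (nnet d ρ W (L - 1) xhat i - nnet d ρ W (L - 1) xhat j) -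
        (nnet d ρ W (L - 1) x i - nnet d ρ W (L - 1) x j) ≤
      εx * vecL1 (fun q => W (L - 1) i q - W (L - 1) j q) *
        ∏ m ∈ Finset.range (L - 1), matLinf (W m) :=
  statement13_general d ρ hρ_lip L W εx hεx x xhat hx i j
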